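/- arXiv:1001.4766 — 2 statements merged into one kernel-verified Lean document; each statement's English description precedes it below -/
import Mathlib

section
/- For integers m ≥ 1, L ≥ 0, k ≥ 1: ∑_{n=0}^{L} (-1)^n τ^{n(n+1)/2 - m·n} [L choose n]_τ [n+k-1 choose m-1]_τ = (-1)^L τ^{L(L-2m+1)/2} [k-1 choose m-L-1]_τ, where [N choose n]_τ is the Gaussian binomial coefficient (defined as 0 when n < 0 or n > N, and 1 when n = 0). -/
/-!
Write `[N, n]` for `qbinom τ N n` and induct on `L`, for all integers `k` and `m` at once.
The τ-Pascal rule `[L+1, n] = [L, n] + τ^(L+1-n) [L, n-1]` splits the sum for `L + 1` into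
the sum for `L` minus `τ^(L+1-m)` times the sum for `L` with `k` replaced by `k + 1`, and the
other τ-Pascal rule `[k, n] = τ^n [k-1, n] + [k-1, n-1]` shows that the right-hand side obeys
the same recursion.
-/

/-- The τ-binomial (Gaussian binomial) coefficient
`[N choose n]_τ = ∏_{j=0}^{n-1} (1-τ^{N-j})/(1-τ^{j+1})`, defined to be 0 for n < 0. -/
noncomputable def qbinom (τ : ℝ) (N n : ℤ) : ℝ :=
  if n < 0 then 0
  else ∏ j ∈ Finset.range n.toNat, (1 - τ ^ (N - (j : ℤ))) / (1 - τ ^ (j + 1))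

open Finset

section QBinom

lemma qbinom_of_neg (τ : ℝ) (N : ℤ) {n : ℤ} (hn : n < 0) : qbinom τ N n = 0 := by
  simp [qbinom, hn]

lemma qbinom_zero_right (τ : ℝ) (N : ℤ) : qbinom τ N 0 = 1 := by
  simp [qbinom]

lemma qbinom_natCast (τ : ℝ) (N : ℤ) (s : ℕ) :
    qbinom τ N s = ∏ j ∈ range s, (1 - τ ^ (N - (j : ℤ))) / (1 - τ ^ (j + 1)) := by
  simp [qbinom]

lemma qbinom_natCast_of_lt (τ : ℝ) (N : ℕ) {n : ℤ} (h : (N : ℤ) < n) :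
    qbinom τ N n = 0 := by
  lift n to ℕ using by omega
  rw [qbinom_natCast]
  exact prod_eq_zero (i := N) (mem_range.mpr (by omega)) (by simp)

lemma qbinom_succ_natCast_succ (τ : ℝ) (N : ℤ) (s : ℕ) :
    qbinom τ (N + 1) (s + 1 : ℕ) = (1 - τ ^ (N + 1)) / (1 - τ ^ (s + 1)) * qbinom τ N s := by
  have hshift : ∀ j : ℕ, N + 1 - ((j + 1 : ℕ) : ℤ) = N - j := fun j => by push_cast; ring
  simp only [qbinom_natCast, prod_div_distrib]
  rw [prod_range_succ' (fun j : ℕ => 1 - τ ^ (N + 1 - (j : ℤ))), prod_range_succ]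
  simp only [hshift, Nat.cast_zero, sub_zero]
  rw [mul_div_mul_comm, mul_comm]

lemma qbinom_natCast_succ (τ : ℝ) (N : ℤ) (s : ℕ) :
    qbinom τ N (s + 1 : ℕ) = (1 - τ ^ (N - s)) / (1 - τ ^ (s + 1)) * qbinom τ N s := by
  rw [qbinom_natCast, prod_range_succ, ← qbinom_natCast, mul_comm]

variable {τ : ℝ} (hτ0 : τ ≠ 0) (hτ : ∀ j : ℕ, 1 ≤ j → τ ^ j ≠ 1)
include hτ0 hτ

lemma qbinom_add_one_left (N n : ℤ) :
    qbinom τ (N + 1) n = qbinom τ N n + τ ^ (N + 1 - n) * qbinom τ N (n - 1) := by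
  rcases lt_trichotomy n 0 with hn | rfl | hn
  · simp [qbinom_of_neg τ _ hn, qbinom_of_neg τ N (show n - 1 < 0 by omega)]
  · simp [qbinom_zero_right, qbinom_of_neg τ N (show (-1 : ℤ) < 0 by norm_num)]
  lift n to ℕ using hn.le
  obtain ⟨s, rfl⟩ : ∃ s, n = s + 1 := ⟨n - 1, by omega⟩
  have hden : (1 : ℝ) - τ ^ (s + 1) ≠ 0 := sub_ne_zero.mpr (hτ (s + 1) (by omega)).symm
  have hpow : τ ^ (N - s) * τ ^ (s + 1) = τ ^ (N + 1) := by
    rw [← zpow_natCast, ← zpow_add₀ hτ0]; push_cast; ring_nf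
  rw [qbinom_succ_natCast_succ, qbinom_natCast_succ,
    show N + 1 - ((s + 1 : ℕ) : ℤ) = N - s by push_cast; ring,
    show ((s + 1 : ℕ) : ℤ) - 1 = s by push_cast; ring, ← hpow]
  field_simp
  ring

lemma qbinom_add_one_left' (N n : ℤ) :
    qbinom τ (N + 1) n = τ ^ n * qbinom τ N n + qbinom τ N (n - 1) := by
  rcases lt_trichotomy n 0 with hn | rfl | hn
  · simp [qbinom_of_neg τ _ hn, qbinom_of_neg τ N (show n - 1 < 0 by omega)]
  · simp [qbinom_zero_right, qbinom_of_neg τ N (show (-1 : ℤ) < 0 by norm_num)]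
  lift n to ℕ using hn.le
  obtain ⟨s, rfl⟩ : ∃ s, n = s + 1 := ⟨n - 1, by omega⟩
  have hden : (1 : ℝ) - τ ^ (s + 1) ≠ 0 := sub_ne_zero.mpr (hτ (s + 1) (by omega)).symm
  have hpow : τ ^ (s + 1) * τ ^ (N - s) = τ ^ (N + 1) := by
    rw [← zpow_natCast, ← zpow_add₀ hτ0]; push_cast; ring_nf
  rw [qbinom_succ_natCast_succ, qbinom_natCast_succ,
    show ((s + 1 : ℕ) : ℤ) - 1 = s by push_cast; ring, zpow_natCast, ← hpow]
  field_simp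
  ring

end QBinom

lemma triangle_add_one (n : ℕ) : (n + 1) * (n + 1 + 1) / 2 = n * (n + 1) / 2 + (n + 1) := by
  have h := Nat.triangle_succ (n + 1)
  simp only [Nat.add_sub_cancel] at h
  rw [mul_comm, h, mul_comm]

noncomputable def qGaussWeight (τ : ℝ) (m : ℤ) (n : ℕ) : ℝ :=
  (-1 : ℝ) ^ n * τ ^ (((n * (n + 1) / 2 : ℕ) : ℤ) - m * n)

lemma qGaussWeight_succ {τ : ℝ} (hτ0 : τ ≠ 0) (m : ℤ) (n : ℕ) :
    qGaussWeight τ m (n + 1) = -τ ^ ((n : ℤ) + 1 - m) * qGaussWeight τ m n := by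
  have hexp : (((n + 1) * (n + 1 + 1) / 2 : ℕ) : ℤ) - m * ((n + 1 : ℕ) : ℤ)
      = ((n : ℤ) + 1 - m) + ((((n * (n + 1) / 2 : ℕ) : ℤ)) - m * n) := by
    rw [triangle_add_one]; push_cast; ring
  rw [qGaussWeight, qGaussWeight, hexp, zpow_add₀ hτ0, pow_succ]
  ring

noncomputable def qGaussSum (τ : ℝ) (m k : ℤ) (L : ℕ) : ℝ :=
  ∑ n ∈ range (L + 1), qGaussWeight τ m n * qbinom τ L n * qbinom τ (n + k - 1) (m - 1)

section QGaussSum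

variable {τ : ℝ} (hτ0 : τ ≠ 0) (hτ : ∀ j : ℕ, 1 ≤ j → τ ^ j ≠ 1)
include hτ0 hτ

lemma qGaussSum_succ (m k : ℤ) (L : ℕ) :
    qGaussSum τ m k (L + 1)
      = qGaussSum τ m k L - τ ^ ((L : ℤ) + 1 - m) * qGaussSum τ m (k + 1) L := by
  have hsplit : ∀ n : ℕ, qbinom τ ((L + 1 : ℕ) : ℤ) n
      = qbinom τ L n + τ ^ ((L : ℤ) + 1 - n) * qbinom τ L ((n : ℤ) - 1) := fun n => by
    rw [Nat.cast_succ, qbinom_add_one_left hτ0 hτ]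
  have hfirst : ∑ n ∈ range (L + 1 + 1),
      qGaussWeight τ m n * qbinom τ L n * qbinom τ (n + k - 1) (m - 1) = qGaussSum τ m k L := by
    rw [sum_range_succ, qbinom_natCast_of_lt τ L (by omega), mul_zero, zero_mul, add_zero,
      qGaussSum]
  have hsecond : ∑ n ∈ range (L + 1 + 1), qGaussWeight τ m n
        * (τ ^ ((L : ℤ) + 1 - n) * qbinom τ L ((n : ℤ) - 1)) * qbinom τ (n + k - 1) (m - 1)
      = -τ ^ ((L : ℤ) + 1 - m) * qGaussSum τ m (k + 1) L := by
    rw [sum_range_succ', qGaussSum, mul_sum]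
    simp only [Nat.cast_zero, zero_sub, qbinom_of_neg τ _ (show (-1 : ℤ) < 0 by norm_num),
      mul_zero, zero_mul, add_zero]
    refine sum_congr rfl fun j _ => ?_
    have hpow : τ ^ ((j : ℤ) + 1 - m) * τ ^ ((L : ℤ) + 1 - ((j + 1 : ℕ) : ℤ))
        = τ ^ ((L : ℤ) + 1 - m) := by
      rw [← zpow_add₀ hτ0]; push_cast; ring_nf
    rw [qGaussWeight_succ hτ0, ← hpow, show ((j + 1 : ℕ) : ℤ) - 1 = j by push_cast; ring,
      show ((j + 1 : ℕ) : ℤ) + k - 1 = j + (k + 1) - 1 by push_cast; ring]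
    ring
  rw [qGaussSum, sum_congr rfl fun n _ => by rw [hsplit, mul_add, add_mul], sum_add_distrib,
    hfirst, hsecond]
  ring

theorem qGaussSum_eq (m k : ℤ) (L : ℕ) :
    qGaussSum τ m k L = qGaussWeight τ m L * qbinom τ (k - 1) (m - L - 1) := by
  induction L generalizing k with
  | zero => simp [qGaussSum, qGaussWeight, qbinom_zero_right]
  | succ L ih =>
    have hpascal := qbinom_add_one_left' hτ0 hτ (k - 1) (m - L - 1)
    have hcancel : τ ^ ((L : ℤ) + 1 - m) * τ ^ (m - L - 1) = 1 := by
      rw [← zpow_add₀ hτ0]; ring_nf; exact zpow_zero τ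
    rw [sub_add_cancel] at hpascal
    rw [qGaussSum_succ hτ0 hτ, ih, ih, add_sub_cancel_right, hpascal, qGaussWeight_succ hτ0,
      show m - ((L + 1 : ℕ) : ℤ) - 1 = m - L - 1 - 1 by push_cast; ring]
    linear_combination (-qGaussWeight τ m L * qbinom τ (k - 1) (m - L - 1)) * hcancel

end QGaussSum

theorem q_gauss_identity_general (τ : ℝ) (hτ0 : τ ≠ 0) (hτ : ∀ j : ℕ, 1 ≤ j → τ ^ j ≠ 1)
    (m L k : ℕ) :
    ∑ n ∈ Finset.range (L + 1),
        (-1 : ℝ) ^ n * τ ^ (((n * (n + 1) / 2 : ℕ) : ℤ) - (m : ℤ) * n)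
          * qbinom τ (L : ℤ) (n : ℤ) * qbinom τ ((n : ℤ) + k - 1) ((m : ℤ) - 1)
      = (-1 : ℝ) ^ L * τ ^ (((L * (L + 1) / 2 : ℕ) : ℤ) - (m : ℤ) * L)
          * qbinom τ ((k : ℤ) - 1) ((m : ℤ) - (L : ℤ) - 1) :=
  qGaussSum_eq hτ0 hτ m k L

theorem q_gauss_identity (τ : ℝ) (hτ0 : τ ≠ 0) (hτ : ∀ j : ℕ, 1 ≤ j → τ ^ j ≠ 1)
    (m L k : ℕ) (hm : 1 ≤ m) (hk : 1 ≤ k) :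
    ∑ n ∈ Finset.range (L + 1),
        (-1 : ℝ) ^ n * τ ^ (((n * (n + 1) / 2 : ℕ) : ℤ) - (m : ℤ) * n)
          * qbinom τ (L : ℤ) (n : ℤ) * qbinom τ ((n : ℤ) + k - 1) ((m : ℤ) - 1)
      = (-1 : ℝ) ^ L * τ ^ (((L * (L + 1) / 2 : ℕ) : ℤ) - (m : ℤ) * L)
          * qbinom τ ((k : ℤ) - 1) ((m : ℤ) - (L : ℤ) - 1) :=
  q_gauss_identity_general τ hτ0 hτ m L k
end

section
/- For integers L ≥ 0 and 1 ≤ m ≤ L, ∑_{n=1}^{L} (-1)^n τ^{n(n+1)/2 - m·n} [L choose n]_τ [n-1 choose m-1]_τ = (-1)^m τ^{-m(m-1)/2}. -/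
open Finset

noncomputable def Pn (τ : ℝ) (N n : ℕ) : ℝ :=
  ∏ j ∈ Finset.range n, (1 - τ ^ ((N : ℤ) - (j : ℤ)))

noncomputable def Dd (τ : ℝ) (n : ℕ) : ℝ :=
  ∏ j ∈ Finset.range n, (1 - τ ^ (j + 1))

noncomputable def qb (τ : ℝ) (N n : ℕ) : ℝ := Pn τ N n / Dd τ n

lemma Dd_ne (τ : ℝ) (hτ : ∀ j : ℕ, 1 ≤ j → τ ^ j ≠ 1) (n : ℕ) : Dd τ n ≠ 0 := by
  refine Finset.prod_ne_zero_iff.2 fun j _ => ?_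
  exact sub_ne_zero.2 (Ne.symm (hτ (j+1) (Nat.le_add_left 1 j)))

lemma qb_zero (τ : ℝ) (N : ℕ) : qb τ N 0 = 1 := by simp [qb, Pn, Dd]

lemma qb_diag_succ (τ : ℝ) (N : ℕ) : qb τ N (N + 1) = 0 := by
  have : Pn τ N (N+1) = 0 := by
    refine Finset.prod_eq_zero (Finset.self_mem_range_succ N) ?_
    simp
  simp [qb, this]

lemma Pn_succ_left (τ : ℝ) (N n : ℕ) :
    Pn τ (N + 1) (n + 1) = (1 - τ ^ ((N : ℤ) + 1)) * Pn τ N n := by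
  simp only [Pn, Finset.prod_range_succ']
  push_cast
  rw [mul_comm]
  congr 1
  norm_num

lemma pascal (τ : ℝ) (hτ0 : τ ≠ 0) (hτ : ∀ j : ℕ, 1 ≤ j → τ ^ j ≠ 1) (N n : ℕ) :
    qb τ (N + 1) (n + 1) = τ ^ (n + 1) * qb τ N (n + 1) + qb τ N n := by
  have hd : Dd τ (n+1) = Dd τ n * (1 - τ ^ (n+1)) := Finset.prod_range_succ _ _
  have hp : Pn τ N (n+1) = Pn τ N n * (1 - τ ^ ((N:ℤ) - n)) := Finset.prod_range_succ _ _
  have hkey : τ ^ (n+1) * τ ^ ((N:ℤ) - n) = τ ^ ((N:ℤ) + 1) := by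
    rw [← zpow_natCast τ (n+1), ← zpow_add₀ hτ0]
    congr 1; push_cast; ring
  have h1 : (1 - τ ^ (n+1)) ≠ 0 := sub_ne_zero.2 (Ne.symm (hτ (n+1) (Nat.le_add_left 1 n)))
  have h2 := Dd_ne τ hτ n
  rw [qb, qb, qb, Pn_succ_left, hd, hp]
  rw [← hkey]
  field_simp
  ring

lemma qbt (τ : ℝ) (hτ0 : τ ≠ 0) (hτ : ∀ j : ℕ, 1 ≤ j → τ ^ j ≠ 1) :
    ∀ L : ℕ, ∀ y : ℝ,
      ∑ n ∈ range (L+1), (-1:ℝ)^n * τ^(n.choose 2) * qb τ L n * y^n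
        = ∏ i ∈ range L, (1 - y * τ^i) := by
  intro L
  induction L with
  | zero => intro y; simp [qb_zero]
  | succ L ih =>
    intro y
    have hC : ∀ n : ℕ, (n+1).choose 2 = n.choose 2 + n := by
      intro n
      rw [Nat.choose_succ_succ]
      simp [Nat.add_comm]
    rw [Finset.sum_range_succ']
    have h0 : (-1:ℝ)^0 * τ^((0:ℕ).choose 2) * qb τ (L+1) 0 * y^0 = 1 := by
      simp [qb_zero]
    rw [h0]
    have hsplit : ∀ n ∈ range (L+1),
        (-1:ℝ)^(n+1) * τ^((n+1).choose 2) * qb τ (L+1) (n+1) * y^(n+1)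
          = ((-1:ℝ)^(n+1) * τ^((n+1).choose 2) * qb τ L (n+1) * (τ*y)^(n+1))
            + (-y) * ((-1:ℝ)^n * τ^(n.choose 2) * qb τ L n * (τ*y)^n) := by
      intro n _
      rw [pascal τ hτ0 hτ L n, hC n]
      ring
    rw [Finset.sum_congr rfl hsplit, Finset.sum_add_distrib, ← Finset.mul_sum]
    rw [ih (τ*y)]
    have h2 : ∑ n ∈ range (L+1),
        ((-1:ℝ)^(n+1) * τ^((n+1).choose 2) * qb τ L (n+1) * (τ*y)^(n+1))
        = ∏ i ∈ range L, (1 - τ*y * τ^i) - 1 := by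
      have := Finset.sum_range_succ' (fun n => (-1:ℝ)^n * τ^(n.choose 2) * qb τ L n * (τ*y)^n) (L+1)
      have hend : ∑ n ∈ range (L+1+1), ((-1:ℝ)^n * τ^(n.choose 2) * qb τ L n * (τ*y)^n)
          = ∏ i ∈ range L, (1 - τ*y * τ^i) := by
        rw [Finset.sum_range_succ, qb_diag_succ, ih (τ*y)]
        ring
      rw [hend] at this
      have hz : ((-1:ℝ)^0 * τ^((0:ℕ).choose 2) * qb τ L 0 * (τ*y)^0) = 1 := by simp [qb_zero]
      rw [hz] at this
      linarith
    rw [h2]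
    rw [Finset.prod_range_succ']
    have hfac : ∀ i ∈ range L, (1 - τ*y*τ^i) = (1 - y * τ^(i+1)) := by
      intro i _; ring
    rw [Finset.prod_congr rfl hfac]
    ring

lemma qbinom_nat (τ : ℝ) (N n : ℕ) : qbinom τ (N : ℤ) (n : ℤ) = qb τ N n := by
  rw [qbinom, if_neg (by exact_mod_cast Int.not_lt.2 (Int.natCast_nonneg n)), Int.toNat_natCast,
    qb, Pn, Dd, ← Finset.prod_div_distrib]

lemma zpow_sum' (τ : ℝ) (hτ0 : τ ≠ 0) (s : Finset ℕ) (f : ℕ → ℤ) :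
    τ ^ (∑ j ∈ s, f j) = ∏ j ∈ s, τ ^ f j := by
  classical
  induction s using Finset.cons_induction with
  | empty => simp
  | cons a s ha ih => rw [Finset.sum_cons, Finset.prod_cons, zpow_add₀ hτ0, ih]

lemma gauss (m : ℕ) (hm : 1 ≤ m) :
    ∑ j ∈ range (m-1), ((j : ℤ) + 1) = ((m * (m-1) / 2 : ℕ) : ℤ) := by
  obtain ⟨k, rfl⟩ : ∃ k, m = k + 1 := ⟨m - 1, by omega⟩
  have hnat : ∑ j ∈ range k, (j + 1) = (k+1) * k / 2 := by
    have h1 : ∑ j ∈ range (k+1), j = ∑ j ∈ range k, (j + 1) + 0 :=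
      Finset.sum_range_succ' (fun j => j) k
    have h2 : ∑ j ∈ range (k+1), j = (k+1) * k / 2 := by
      rw [Finset.sum_range_id]; simp
    omega
  simp only [Nat.add_sub_cancel]
  rw [← hnat]
  push_cast
  rfl

lemma key (τ : ℝ) (hτ0 : τ ≠ 0) (m : ℕ) (hm : 1 ≤ m) (n : ℕ) :
    qbinom τ ((n:ℤ) - 1) ((m:ℤ) - 1)
      = (τ ^ (-((m * (m-1) / 2 : ℕ) : ℤ)) / Dd τ (m-1))
          * ∏ j ∈ range (m-1), (τ ^ (j+1) - τ ^ n) := by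
  rw [qbinom, if_neg (by omega)]
  have htn : ((m:ℤ) - 1).toNat = m - 1 := by omega
  rw [htn]
  have fac : ∀ j : ℕ, (1 - τ ^ (((n:ℤ) - 1) - j)) = τ ^ (-((j:ℤ)+1)) * (τ ^ (j+1) - τ ^ n) := by
    intro j
    have h1 : τ ^ (-((j:ℤ)+1)) * τ ^ (j+1 : ℕ) = 1 := by
      rw [← zpow_natCast τ (j+1), ← zpow_add₀ hτ0,
        show (-((j:ℤ)+1) + ((j+1:ℕ):ℤ)) = 0 by push_cast; ring, zpow_zero]
    have h2 : τ ^ (-((j:ℤ)+1)) * τ ^ (n : ℕ) = τ ^ (((n:ℤ) - 1) - j) := by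
      rw [← zpow_natCast τ n, ← zpow_add₀ hτ0]
      congr 1; ring
    rw [mul_sub, h1, h2]
  calc ∏ j ∈ range (m-1), (1 - τ ^ (((n:ℤ) - 1) - j)) / (1 - τ ^ (j + 1))
      = (∏ j ∈ range (m-1), τ ^ (-((j:ℤ)+1)) * (τ ^ (j+1) - τ ^ n)) / Dd τ (m-1) := by
        rw [Dd, ← Finset.prod_div_distrib]
        exact Finset.prod_congr rfl fun j _ => by rw [fac j]
    _ = ((∏ j ∈ range (m-1), τ ^ (-((j:ℤ)+1))) * ∏ j ∈ range (m-1), (τ ^ (j+1) - τ ^ n))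
          / Dd τ (m-1) := by rw [Finset.prod_mul_distrib]
    _ = _ := by
        rw [← zpow_sum' τ hτ0]
        have : ∑ j ∈ range (m-1), (-((j:ℤ)+1)) = -((m * (m-1) / 2 : ℕ) : ℤ) := by
          rw [← gauss m hm, ← Finset.sum_neg_distrib]
        rw [this]; ring

theorem q_gauss_identity_k_zero (τ : ℝ) (hτ0 : τ ≠ 0) (hτ : ∀ j : ℕ, 1 ≤ j → τ ^ j ≠ 1)
    (m L : ℕ) (hm : 1 ≤ m) (hmL : m ≤ L) :
    ∑ n ∈ Finset.Icc 1 L,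
        (-1 : ℝ) ^ n * τ ^ (((n * (n + 1) / 2 : ℕ) : ℤ) - (m : ℤ) * n)
          * qbinom τ (L : ℤ) (n : ℤ) * qbinom τ ((n : ℤ) - 1) ((m : ℤ) - 1)
      = (-1 : ℝ) ^ m * τ ^ (-((m * (m - 1) / 2 : ℕ) : ℤ)) := by
  have hDd := Dd_ne τ hτ (m-1)
  set P : Polynomial ℝ := ∏ j ∈ range (m-1), (Polynomial.C (τ^(j+1)) - Polynomial.X) with hP
  have hdeg : P.natDegree < m := by
    have hle : P.natDegree ≤ ∑ j ∈ range (m-1), (Polynomial.C (τ^(j+1)) - Polynomial.X).natDegree :=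
      Polynomial.natDegree_prod_le _ _
    have h1 : ∀ j : ℕ, (Polynomial.C (τ^(j+1)) - Polynomial.X : Polynomial ℝ).natDegree = 1 := by
      intro j
      rw [show (Polynomial.C (τ^(j+1)) - Polynomial.X : Polynomial ℝ)
          = -(Polynomial.X - Polynomial.C (τ^(j+1))) by ring,
        Polynomial.natDegree_neg, Polynomial.natDegree_X_sub_C]
    simp only [h1, Finset.sum_const, Finset.card_range, smul_eq_mul, mul_one] at hle
    omega
  have heval : ∀ x : ℝ, P.eval x = ∑ d ∈ range m, P.coeff d * x^d :=
    fun x => Polynomial.eval_eq_sum_range' hdeg x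
  have hevalp : ∀ x : ℝ, P.eval x = ∏ j ∈ range (m-1), (τ^(j+1) - x) := by
    intro x
    rw [hP, Polynomial.eval_prod]
    exact Finset.prod_congr rfl fun j _ => by simp
  have term : ∀ n d : ℕ,
      τ ^ (((n * (n + 1) / 2 : ℕ) : ℤ) - (m : ℤ) * n) * (τ^n)^d
        = τ^(n.choose 2) * (τ ^ ((1:ℤ) + d - m))^n := by
    intro n d
    have hnat : (n * (n+1) / 2 : ℕ) = n.choose 2 + n := by
      have h1 : n * (n+1) / 2 = (n+1).choose 2 := by
        rw [Nat.choose_two_right, Nat.succ_sub_one, Nat.mul_comm]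
      rw [h1, Nat.choose_succ_succ, Nat.choose_one_right, Nat.add_comm]
    rw [← pow_mul, ← zpow_natCast τ (n*d), ← zpow_add₀ hτ0,
      ← zpow_natCast τ (n.choose 2), ← zpow_natCast (τ ^ ((1:ℤ) + d - m)) n, ← zpow_mul,
      ← zpow_add₀ hτ0]
    congr 1
    push_cast [hnat]
    ring
  have inner0 : ∀ d ∈ range m,
      ∑ n ∈ range (L+1), (-1:ℝ)^n * τ^(n.choose 2) * qb τ L n * (τ ^ ((1:ℤ) + d - m))^n = 0 := by
    intro d hd
    have hdm : d < m := mem_range.1 hd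
    rw [qbt τ hτ0 hτ L (τ ^ ((1:ℤ) + d - m))]
    apply Finset.prod_eq_zero (i := m - 1 - d) (mem_range.2 (by omega))
    have hc : ((m - 1 - d : ℕ) : ℤ) = (m:ℤ) - 1 - d := by omega
    rw [← zpow_natCast τ (m-1-d), hc, ← zpow_add₀ hτ0,
      show ((1:ℤ) + d - m) + ((m:ℤ) - 1 - d) = 0 by ring, zpow_zero, sub_self]
  have step1 : ∀ n ∈ range (L+1),
      (-1:ℝ)^n * τ ^ (((n * (n + 1) / 2 : ℕ) : ℤ) - (m : ℤ) * n)
          * qbinom τ (L:ℤ) (n:ℤ) * qbinom τ ((n:ℤ) - 1) ((m:ℤ) - 1)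
        = ∑ d ∈ range m,
            ((τ ^ (-((m * (m-1) / 2 : ℕ) : ℤ)) / Dd τ (m-1)) * P.coeff d)
              * ((-1:ℝ)^n * τ^(n.choose 2) * qb τ L n * (τ ^ ((1:ℤ) + d - m))^n) := by
    intro n _
    rw [qbinom_nat, key τ hτ0 m hm n, ← hevalp (τ^n), heval (τ^n), Finset.mul_sum,
      Finset.mul_sum]
    refine Finset.sum_congr rfl fun d _ => ?_
    linear_combination ((τ ^ (-((m * (m-1) / 2 : ℕ) : ℤ)) / Dd τ (m-1)) * P.coeff d
      * (-1:ℝ)^n * qb τ L n) * term n d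
  have full : ∑ n ∈ range (L+1),
      ((-1:ℝ)^n * τ ^ (((n * (n + 1) / 2 : ℕ) : ℤ) - (m : ℤ) * n)
        * qbinom τ (L:ℤ) (n:ℤ) * qbinom τ ((n:ℤ) - 1) ((m:ℤ) - 1)) = 0 := by
    rw [Finset.sum_congr rfl step1, Finset.sum_comm]
    refine Finset.sum_eq_zero fun d hd => ?_
    rw [← Finset.mul_sum, inner0 d hd, mul_zero]
  have hF0 : (-1:ℝ)^(0:ℕ) * τ ^ ((((0:ℕ) * ((0:ℕ) + 1) / 2 : ℕ) : ℤ) - (m : ℤ) * (0:ℕ))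
      * qbinom τ (L:ℤ) ((0:ℕ):ℤ) * qbinom τ (((0:ℕ):ℤ) - 1) ((m:ℤ) - 1)
      = (-1:ℝ)^(m-1) * τ ^ (-((m * (m-1) / 2 : ℕ) : ℤ)) := by
    rw [key τ hτ0 m hm 0, qbinom_nat τ L 0, qb_zero]
    have hprod : ∏ j ∈ range (m-1), (τ ^ (j+1) - τ ^ (0:ℕ))
        = (-1:ℝ)^(m-1) * Dd τ (m-1) := by
      have h1 : ∀ j ∈ range (m-1), (τ ^ (j+1) - τ ^ (0:ℕ)) = (-1) * (1 - τ^(j+1)) := by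
        intro j _; simp
      rw [Finset.prod_congr rfl h1, Finset.prod_mul_distrib, Finset.prod_const,
        Finset.card_range, Dd]
    rw [hprod]
    have hz : τ ^ ((((0:ℕ) * ((0:ℕ) + 1) / 2 : ℕ) : ℤ) - (m : ℤ) * (0:ℕ)) = 1 := by
      norm_num
    rw [hz]
    field_simp
  rw [Finset.range_eq_Ico, Finset.sum_eq_sum_Ico_succ_bot (by omega : 0 < L+1)] at full
  have hIcc : Finset.Icc 1 L = Finset.Ico 1 (L+1) := by rw [Finset.Ico_add_one_right_eq_Icc]
  rw [hIcc]
  have hsign : (-1:ℝ)^m = -(-1:ℝ)^(m-1) := by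
    obtain ⟨k, rfl⟩ : ∃ k, m = k + 1 := ⟨m - 1, by omega⟩
    simp [pow_succ]
  rw [hF0] at full
  rw [hsign]
  linarith
end
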